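/- arXiv:1806.02810 — 12 statements merged into one kernel-verified Lean document; each statement's English description precedes it below -/
import Mathlib

section
/- Let f be a uniform equivalence (bijection, uniformly continuous with uniformly continuous inverse) of a metric space X and μ a non-atomic Borel measure on X. Then μ is pointwise expansive for f if and only if for every nontrivial subgroup H of ℤ, μ is pointwise expansive for f through H. -/
/-!
If a subgroup `H ≤ ℤ` contains some `m > 0`, every `n : ℤ` splits as `n = k + r` with `k ∈ H` and
`0 ≤ r < m`. The finitely many maps `f ^ r`, `r < m`, share a modulus of uniform continuity, so an
orbit that stays `ε`-close along `H` stays `δ`-close along all of `ℤ`: `Γ^H_ε(x) ⊆ Γ_δ(x)`.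
Conversely `ℤ` itself is a nontrivial subgroup.
-/

open MeasureTheory

/-- The set of points whose full `ℤ`-orbit stays `δ`-close to that of `x`. -/
def Gamma {X : Type*} [MetricSpace X] (f : Equiv.Perm X) (δ : ℝ) (x : X) : Set X :=
  {y | ∀ n : ℤ, dist ((f ^ n) x) ((f ^ n) y) ≤ δ}

/-- The set of points whose orbit through times in `H` stays `δ`-close to that of `x`. -/
def GammaThrough {X : Type*} [MetricSpace X] (f : Equiv.Perm X) (H : Set ℤ) (δ : ℝ) (x : X) :
    Set X :=
  {y | ∀ n ∈ H, dist ((f ^ n) x) ((f ^ n) y) ≤ δ}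

theorem UniformContinuous.exists_forall_dist_le {ι α β : Type*} [Finite ι]
    [PseudoMetricSpace α] [PseudoMetricSpace β] {g : ι → α → β}
    (hg : ∀ i, UniformContinuous (g i)) {δ : ℝ} (hδ : 0 < δ) :
    ∃ ε > 0, ∀ a b, dist a b ≤ ε → ∀ i, dist (g i a) (g i b) ≤ δ := by
  have : ∀ᶠ p in uniformity α, ∀ i, dist (g i p.1) (g i p.2) ≤ δ :=
    Filter.eventually_all.2 fun i => hg i (Metric.uniformity_basis_dist_le.mem_of_mem hδ)
  obtain ⟨ε, hε, hclose⟩ := Metric.uniformity_basis_dist_le.eventually_iff.1 this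
  exact ⟨ε, hε, fun a b hab => hclose (x := (a, b)) hab⟩

theorem AddSubgroup.exists_pos_mem_of_ne_bot {H : AddSubgroup ℤ} (hH : H ≠ ⊥) :
    ∃ m ∈ H, 0 < m := by
  obtain ⟨g, hgH, hg⟩ := H.bot_or_exists_ne_zero.resolve_left hH
  exact ⟨|g|, abs_mem_iff.2 hgH, abs_pos.2 hg⟩

section

variable {X : Type*} [MetricSpace X] (f : Equiv.Perm X)

theorem gammaThrough_univ (δ : ℝ) (x : X) : GammaThrough f Set.univ δ x = Gamma f δ x := by
  simp [Gamma, GammaThrough]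

theorem exists_gammaThrough_subset_gamma (hf : UniformContinuous f) {H : AddSubgroup ℤ}
    (hH : H ≠ ⊥) {δ : ℝ} (hδ : 0 < δ) :
    ∃ ε > 0, ∀ x, GammaThrough f H ε x ⊆ Gamma f δ x := by
  obtain ⟨m, hmH, hm⟩ := H.exists_pos_mem_of_ne_bot hH
  obtain ⟨ε, hε, hclose⟩ := UniformContinuous.exists_forall_dist_le
    (g := fun r : Fin m.toNat => ⇑(f ^ (r : ℕ)))
    (fun r => by simpa only [Equiv.Perm.coe_pow] using UniformContinuous.iterate f r hf) hδ
  refine ⟨ε, hε, fun x y hy n => ?_⟩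
  have hr : 0 ≤ n % m := Int.emod_nonneg n hm.ne'
  have hrm : n % m < m := Int.emod_lt_of_pos n hm
  have hkH : n - n % m ∈ H := by
    rw [Int.emod_def, sub_sub_cancel, mul_comm, ← smul_eq_mul]
    exact H.zsmul_mem hmH _
  have hsplit : f ^ n = f ^ (n % m).toNat * f ^ (n - n % m) := by
    rw [← zpow_natCast, ← zpow_add, Int.toNat_of_nonneg hr, add_sub_cancel]
  rw [hsplit, Equiv.Perm.mul_apply, Equiv.Perm.mul_apply]
  exact hclose _ _ (hy _ hkH) ⟨(n % m).toNat, by omega⟩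

end

theorem stmt_0_general {X : Type*} [MetricSpace X] [MeasurableSpace X]
    (f : Equiv.Perm X) (hf : UniformContinuous f)
    (μ : Measure X) :
    (∀ x : X, ∃ δ > 0, μ (Gamma f δ x) = 0) ↔
      ∀ H : AddSubgroup ℤ, H ≠ ⊥ →
        ∀ x : X, ∃ δ > 0, μ (GammaThrough f (H : Set ℤ) δ x) = 0 := by
  constructor
  · intro h H hH x
    obtain ⟨δ, hδ, hnull⟩ := h x
    obtain ⟨ε, hε, hsub⟩ := exists_gammaThrough_subset_gamma f hf hH hδ
    exact ⟨ε, hε, measure_mono_null (hsub x) hnull⟩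
  · intro h x
    obtain ⟨δ, hδ, hnull⟩ := h ⊤ top_ne_bot x
    rw [AddSubgroup.coe_top, gammaThrough_univ] at hnull
    exact ⟨δ, hδ, hnull⟩

theorem stmt_0 {X : Type*} [MetricSpace X] [MeasurableSpace X] [BorelSpace X]
    (f : Equiv.Perm X) (hf : UniformContinuous f) (hf' : UniformContinuous f.symm)
    (μ : Measure X) (hμ : ∀ x : X, μ {x} = 0) :
    (∀ x : X, ∃ δ > 0, μ (Gamma f δ x) = 0) ↔
      ∀ H : AddSubgroup ℤ, H ≠ ⊥ →
        ∀ x : X, ∃ δ > 0, μ (GammaThrough f (H : Set ℤ) δ x) = 0 :=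
  stmt_0_general f hf μ
end

section
/- Let f be a uniform equivalence of a metric space X and μ a non-atomic Borel measure. Then μ is pointwise expansive for f if and only if μ is pointwise expansive for f^m for any nonzero integer m. -/
/-!
Write `n = r + m q` with `0 ≤ r < |m|`, so that `fⁿ = fʳ ∘ (fᵐ)^q`. The finitely many maps `fʳ`,
`0 ≤ r < |m|`, are uniformly continuous, hence share a modulus `ε` for a given `δ`; therefore a
point whose `fᵐ`-orbit `ε`-shadows that of `x` has its `f`-orbit `δ`-shadowing that of `x`, i.e.
`Γ_{fᵐ}(ε, x) ⊆ Γ_f(δ, x)`.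
-/

open MeasureTheory

/-- `μ` is pointwise expansive for `f`. -/
def PointwiseExpansiveMeasure {X : Type*} [MetricSpace X] [MeasurableSpace X]
    (f : Equiv.Perm X) (μ : Measure X) : Prop :=
  ∀ x : X, ∃ δ > 0, μ (Gamma f δ x) = 0

theorem Equiv.Perm.uniformContinuous_zpow {X : Type*} [UniformSpace X] {f : Equiv.Perm X}
    (hf : UniformContinuous f) (hf' : UniformContinuous f.symm) (k : ℤ) :
    UniformContinuous ⇑(f ^ k) := by
  cases k with
  | ofNat n => exact hf.iterate f n
  | negSucc n =>
    rw [zpow_negSucc, ← inv_pow]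
    exact hf'.iterate f.symm (n + 1)

theorem Metric.exists_common_modulus_of_uniformContinuous {X Y ι : Type*} [Finite ι]
    [PseudoMetricSpace X] [PseudoMetricSpace Y] {g : ι → X → Y}
    (hg : ∀ i, UniformContinuous (g i)) {δ : ℝ} (hδ : 0 < δ) :
    ∃ ε > 0, ∀ a b : X, dist a b < ε → ∀ i, dist (g i a) (g i b) ≤ δ := by
  have := Fintype.ofFinite ι
  obtain ⟨ε, hε, hmod⟩ := Metric.uniformContinuous_iff.1 (uniformContinuous_pi.2 hg) δ hδ
  exact ⟨ε, hε, fun a b hab => (dist_pi_le_iff hδ.le).1 (hmod hab).le⟩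

theorem Gamma_zpow_subset {X : Type*} [MetricSpace X] {f : Equiv.Perm X}
    (hf : UniformContinuous f) (hf' : UniformContinuous f.symm)
    {m : ℤ} (hm : m ≠ 0) {δ : ℝ} (hδ : 0 < δ) (x : X) :
    ∃ ε > 0, Gamma (f ^ m) ε x ⊆ Gamma f δ x := by
  obtain ⟨ε, hε, hmod⟩ := Metric.exists_common_modulus_of_uniformContinuous
    (g := fun r : Fin m.natAbs => ⇑(f ^ (r : ℤ)))
    (fun r => Equiv.Perm.uniformContinuous_zpow hf hf' _) hδ
  refine ⟨ε / 2, half_pos hε, fun y hy n => ?_⟩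
  have hr : n % m < m.natAbs := Int.emod_lt n hm
  have hdecomp : ∀ z, (f ^ n) z = (f ^ ((n % m).toNat : ℤ)) (((f ^ m) ^ (n / m)) z) := by
    intro z
    rw [Int.toNat_of_nonneg (Int.emod_nonneg n hm), ← zpow_mul, ← Equiv.Perm.mul_apply,
      ← zpow_add, Int.emod_add_mul_ediv]
  rw [hdecomp x, hdecomp y]
  exact hmod _ _ ((hy _).trans_lt (half_lt_self hε)) ⟨(n % m).toNat, by omega⟩

theorem stmt_1_general {X : Type*} [MetricSpace X] [MeasurableSpace X]
    (f : Equiv.Perm X) (hf : UniformContinuous f) (hf' : UniformContinuous f.symm)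
    (μ : Measure X) :
    PointwiseExpansiveMeasure f μ ↔
      ∀ m : ℤ, m ≠ 0 → PointwiseExpansiveMeasure (f ^ m) μ := by
  refine ⟨fun h m hm x => ?_, fun h => by simpa using h 1 one_ne_zero⟩
  obtain ⟨δ, hδ, hnull⟩ := h x
  obtain ⟨ε, hε, hsub⟩ := Gamma_zpow_subset hf hf' hm hδ x
  exact ⟨ε, hε, measure_mono_null hsub hnull⟩

theorem stmt_1 {X : Type*} [MetricSpace X] [MeasurableSpace X] [BorelSpace X]
    (f : Equiv.Perm X) (hf : UniformContinuous f) (hf' : UniformContinuous f.symm)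
    (μ : Measure X) (hμ : ∀ x : X, μ {x} = 0) :
    PointwiseExpansiveMeasure f μ ↔
      ∀ m : ℤ, m ≠ 0 → PointwiseExpansiveMeasure (f ^ m) μ :=
  stmt_1_general f hf hf' μ
end

section
/- Let f be a bi-measurable map on a compact metric space X, and μ a non-atomic Borel measure on X. Then μ is pointwise expansive for f if and only if f has a pointwise μ-generator. -/
/-!
Both directions compare the `δ`-shadow `Gamma f δ x` of the orbit of `x` with the cylinder sets
`⋂ n, f⁻ⁿ (cl Uₙ)` of a finite open cover. A cover by balls of radius `δ / 2` has all its
cylinders through `x` inside `Gamma f δ x`; conversely, for a Lebesgue number `ε` of a cover,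
`Gamma f (ε / 2) x` lies inside one such cylinder.
-/

open MeasureTheory

/-- `Λ` is a finite open cover of `X` which is a `μ`-generator at `x` for `f`: for any
bi-sequence of members of `Λ` whose closures contain the orbit of `x`, the intersection of the
pulled-back closures has measure zero. -/
def IsMuGeneratorAt {X : Type*} [MetricSpace X] [MeasurableSpace X]
    (f : Equiv.Perm X) (μ : Measure X) (Λ : Finset (Set X)) (x : X) : Prop :=
  (∀ U ∈ Λ, IsOpen U) ∧ (⋃ U ∈ Λ, U) = Set.univ ∧
    ∀ U : ℤ → Set X, (∀ n, U n ∈ Λ) → (∀ n, (f ^ n) x ∈ closure (U n)) →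
      μ (⋂ n : ℤ, (fun y => (f ^ n) y) ⁻¹' closure (U n)) = 0

open Metric

section

variable {X : Type*} [MetricSpace X]

theorem iInter_preimage_closure_ball_subset_gamma (f : Equiv.Perm X) {δ : ℝ} {x : X}
    {c : ℤ → X} (hx : ∀ n, (f ^ n) x ∈ closure (ball (c n) (δ / 2))) :
    ⋂ n : ℤ, (fun y => (f ^ n) y) ⁻¹' closure (ball (c n) (δ / 2)) ⊆ Gamma f δ x := by
  intro y hy n
  have hxn := closure_ball_subset_closedBall (hx n)
  have hyn := closure_ball_subset_closedBall (Set.mem_iInter.1 hy n)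
  calc dist ((f ^ n) x) ((f ^ n) y)
      ≤ dist ((f ^ n) x) (c n) + dist ((f ^ n) y) (c n) := dist_triangle_right _ _ _
    _ ≤ δ / 2 + δ / 2 := add_le_add hxn hyn
    _ = δ := add_halves δ

theorem gamma_subset_iInter_preimage_closure (f : Equiv.Perm X) {δ ε : ℝ} {x : X}
    {U : ℤ → Set X} (hU : ∀ n, ball ((f ^ n) x) ε ⊆ U n) (hδε : δ < ε) :
    Gamma f δ x ⊆ ⋂ n : ℤ, (fun y => (f ^ n) y) ⁻¹' closure (U n) := fun _ hy =>
  Set.mem_iInter.2 fun n =>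
    subset_closure <| hU n <| mem_ball_comm.1 <| (hy n).trans_lt hδε

variable [MeasurableSpace X] {f : Equiv.Perm X} {μ : Measure X} {x : X}

theorem exists_isMuGeneratorAt_of_measure_gamma_eq_zero [CompactSpace X] {δ : ℝ} (hδ : 0 < δ)
    (hΓ : μ (Gamma f δ x) = 0) : ∃ Λ : Finset (Set X), IsMuGeneratorAt f μ Λ x := by
  classical
  obtain ⟨t, ht⟩ := isCompact_univ.elim_finite_subcover (fun c : X => ball c (δ / 2))
    (fun _ => isOpen_ball) (fun z _ => Set.mem_iUnion.2 ⟨z, mem_ball_self (half_pos hδ)⟩)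
  refine ⟨t.image (ball · (δ / 2)), ?_, ?_, ?_⟩
  · simp only [Finset.mem_image]
    rintro _ ⟨c, -, rfl⟩
    exact isOpen_ball
  · refine Set.eq_univ_of_univ_subset fun z hz => ?_
    obtain ⟨c, hc, hzc⟩ := Set.mem_iUnion₂.1 (ht hz)
    exact Set.mem_iUnion₂.2 ⟨_, Finset.mem_image_of_mem _ hc, hzc⟩
  · intro U hU hx
    choose c _ hc using fun n => Finset.mem_image.1 (hU n)
    simp only [← hc] at hx ⊢
    exact measure_mono_null (iInter_preimage_closure_ball_subset_gamma f hx) hΓ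

theorem IsMuGeneratorAt.exists_measure_gamma_eq_zero [CompactSpace X] {Λ : Finset (Set X)}
    (hΛ : IsMuGeneratorAt f μ Λ x) : ∃ δ > 0, μ (Gamma f δ x) = 0 := by
  obtain ⟨hopen, hcover, hnull⟩ := hΛ
  obtain ⟨ε, hε, hleb⟩ := lebesgue_number_lemma_of_metric (c := fun U : Λ => (U : Set X))
    isCompact_univ (fun U => hopen U U.2) (by simpa [Set.iUnion_subtype] using hcover.ge)
  choose U hU using fun n : ℤ => hleb ((f ^ n) x) (Set.mem_univ _)
  refine ⟨ε / 2, half_pos hε, measure_mono_null ?_ <| hnull (fun n => U n) (fun n => (U n).2)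
    fun n => subset_closure <| hU n <| mem_ball_self hε⟩
  exact gamma_subset_iInter_preimage_closure f hU (half_lt_self hε)

end

theorem stmt_2_general {X : Type*} [MetricSpace X] [CompactSpace X] [MeasurableSpace X]
    (f : Equiv.Perm X) (μ : Measure X) :
    (∀ x : X, ∃ δ > 0, μ (Gamma f δ x) = 0) ↔
      ∀ x : X, ∃ Λ : Finset (Set X), IsMuGeneratorAt f μ Λ x :=
  ⟨fun h x =>
    let ⟨_, hδ, hΓ⟩ := h x
    exists_isMuGeneratorAt_of_measure_gamma_eq_zero hδ hΓ,
  fun h x =>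
    let ⟨_, hΛ⟩ := h x
    hΛ.exists_measure_gamma_eq_zero⟩

theorem stmt_2 {X : Type*} [MetricSpace X] [CompactSpace X] [MeasurableSpace X] [BorelSpace X]
    (f : Equiv.Perm X) (μ : Measure X) (hμ : ∀ x : X, μ {x} = 0) :
    (∀ x : X, ∃ δ > 0, μ (Gamma f δ x) = 0) ↔
      ∀ x : X, ∃ Λ : Finset (Set X), IsMuGeneratorAt f μ Λ x :=
  stmt_2_general f μ
end

section
/- A uniform equivalence f of a separable metric space X is aperiodic with respect to any pointwise expansive measure μ for f: if B ⊆ X is measurable and there is n ≥ 1 with fⁿ(x) = x for all x ∈ B, then μ(B) = 0. -/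
/-!
A periodic point `x` of period `n` has its whole `ℤ`-orbit determined by its first `n` iterates, so
any other `n`-periodic point whose first `n` iterates stay `δ`-close to those of `x` lies in
`Gamma f δ x`. By continuity of `f, …, fⁿ⁻¹` this happens on a neighbourhood of `x` in the set `B`
of `n`-periodic points, so every point of `B` has a relative neighbourhood of measure zero, and
`B` is null because `X` is second countable.
-/

open MeasureTheory Filter Topology

namespace Equiv.Perm

theorem zpow_apply_eq_zpow_emod_apply {α : Type*} (f : Perm α) {n : ℤ} {z : α}
    (hz : (f ^ n) z = z) (m : ℤ) : (f ^ m) z = (f ^ (m % n)) z := by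
  conv_lhs =>
    rw [← Int.emod_add_mul_ediv m n, zpow_add, zpow_mul, mul_apply,
      zpow_apply_eq_self_of_apply_eq_self hz]

variable {X : Type*} [MetricSpace X] {f : Perm X}

theorem mem_Gamma_of_periodic {n : ℕ} (hn : 1 ≤ n) {δ : ℝ} {x y : X}
    (hx : (f ^ (n : ℤ)) x = x) (hy : (f ^ (n : ℤ)) y = y)
    (hclose : ∀ k < n, dist ((f ^ k) x) ((f ^ k) y) ≤ δ) : y ∈ Gamma f δ x := by
  intro m
  rw [zpow_apply_eq_zpow_emod_apply f hx m, zpow_apply_eq_zpow_emod_apply f hy m]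
  obtain ⟨k, hk⟩ := Int.eq_ofNat_of_zero_le (Int.emod_nonneg m (by omega : (n : ℤ) ≠ 0))
  have hkn : (k : ℤ) < n := hk ▸ Int.emod_lt_of_pos m (by omega)
  rw [hk, zpow_natCast]
  exact hclose k (by omega)

theorem eventually_forall_lt_dist_pow_apply_lt (hf : Continuous f) {δ : ℝ} (hδ : 0 < δ)
    (x : X) (n : ℕ) : ∀ᶠ y in 𝓝 x, ∀ k < n, dist ((f ^ k) x) ((f ^ k) y) < δ := by
  refine (eventually_all_finite (Set.finite_Iio n)).2 fun k _ => ?_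
  have hcont : Continuous fun y => dist ((f ^ k) x) ((f ^ k) y) := by
    rw [coe_pow]
    exact continuous_const.dist (hf.iterate k)
  exact hcont.continuousAt.eventually_lt continuousAt_const (by simpa using hδ)

end Equiv.Perm

theorem stmt_6_general {X : Type*} [MetricSpace X] [TopologicalSpace.SeparableSpace X]
    [MeasurableSpace X]
    (f : Equiv.Perm X) (hf : UniformContinuous f)
    (μ : Measure X)
    (hexp : ∀ x : X, ∃ δ > 0, μ (Gamma f δ x) = 0)
    (B : Set X) (n : ℕ) (hn : 1 ≤ n)
    (hper : ∀ x ∈ B, (f ^ (n : ℤ)) x = x) :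
    μ B = 0 := by
  have := UniformSpace.secondCountable_of_separable X
  refine measure_null_of_locally_null B fun x hx => ?_
  obtain ⟨δ, hδ, hΓ⟩ := hexp x
  refine ⟨_, inter_mem_nhdsWithin B
      (Equiv.Perm.eventually_forall_lt_dist_pow_apply_lt hf.continuous hδ x n),
    measure_mono_null ?_ hΓ⟩
  rintro y ⟨hy, hclose⟩
  exact Equiv.Perm.mem_Gamma_of_periodic hn (hper x hx) (hper y hy) fun k hk => (hclose k hk).le

theorem stmt_6 {X : Type*} [MetricSpace X] [TopologicalSpace.SeparableSpace X]
    [MeasurableSpace X] [BorelSpace X]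
    (f : Equiv.Perm X) (hf : UniformContinuous f) (hf' : UniformContinuous f.symm)
    (μ : Measure X) (hμna : ∀ x : X, μ {x} = 0)
    (hexp : ∀ x : X, ∃ δ > 0, μ (Gamma f δ x) = 0)
    (B : Set X) (hB : MeasurableSet B) (n : ℕ) (hn : 1 ≤ n)
    (hper : ∀ x ∈ B, (f ^ (n : ℤ)) x = x) :
    μ B = 0 :=
  stmt_6_general f hf μ hexp B n hn hper
end

section
/- Let f be a uniform equivalence of a separable metric space X and μ a pointwise expansive measure for f. Then the set Per(f) of periodic points of f has μ-measure zero. -/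
/-!
The `ℤ`-orbit of a point fixed by `f ^ m` is `{f ^ k x | k < m}`, so every `f ^ m`-fixed point `y`
whose first `m` iterates stay `δ`-close to those of `x` (an open condition on `y`) lies in the
null set `Gamma f δ x`. Thus `Fix (f ^ m)` is locally null, hence null by second countability,
and `PerSet f` is the countable union of these sets.
-/

open MeasureTheory Filter Topology

/-- The set of periodic points of `f`. -/
def PerSet {X : Type*} (f : Equiv.Perm X) : Set X :=
  {x | ∃ m : ℕ, 1 ≤ m ∧ (f ^ (m : ℤ)) x = x}

theorem Equiv.Perm.zpow_emod_apply_of_isFixedPt {α : Type*} {f : Equiv.Perm α} {m : ℤ} {x : α}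
    (hx : Function.IsFixedPt ⇑(f ^ m) x) (n : ℤ) : (f ^ (n % m)) x = (f ^ n) x := by
  conv_rhs => rw [← Int.emod_add_mul_ediv n m, zpow_add, zpow_mul, Equiv.Perm.mul_apply,
    (hx.perm_zpow (n / m)).eq]

theorem Continuous.perm_zpow_natCast {X : Type*} [TopologicalSpace X] {f : Equiv.Perm X}
    (hf : Continuous f) (k : ℕ) : Continuous (f ^ (k : ℤ)) := by
  rw [zpow_natCast, Equiv.Perm.coe_pow]
  exact hf.iterate k

section

variable {X : Type*} [MetricSpace X] {f : Equiv.Perm X}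

theorem mem_Gamma_of_isFixedPt_zpow {m : ℕ} (hm : 0 < m) {δ : ℝ} {x y : X}
    (hx : Function.IsFixedPt ⇑(f ^ (m : ℤ)) x) (hy : Function.IsFixedPt ⇑(f ^ (m : ℤ)) y)
    (hxy : ∀ k < m, dist ((f ^ (k : ℤ)) x) ((f ^ (k : ℤ)) y) ≤ δ) : y ∈ Gamma f δ x := by
  intro n
  rw [← Equiv.Perm.zpow_emod_apply_of_isFixedPt hx, ← Equiv.Perm.zpow_emod_apply_of_isFixedPt hy]
  have hm' : (0 : ℤ) < m := by exact_mod_cast hm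
  obtain ⟨k, hk⟩ := Int.eq_ofNat_of_zero_le (Int.emod_nonneg n hm'.ne')
  have hkm : k < m := by have := Int.emod_lt_of_pos n hm'; omega
  rw [hk]
  exact hxy k hkm

theorem eventually_dist_zpow_apply_lt (hf : Continuous f) (m : ℕ) {δ : ℝ} (hδ : 0 < δ) (x : X) :
    ∀ᶠ y in 𝓝 x, ∀ k < m, dist ((f ^ (k : ℤ)) x) ((f ^ (k : ℤ)) y) < δ := by
  refine (eventually_all_finite (Set.finite_lt_nat m)).mpr fun k _ => ?_
  have hcont : Continuous fun y => dist ((f ^ (k : ℤ)) x) ((f ^ (k : ℤ)) y) :=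
    continuous_const.dist (hf.perm_zpow_natCast k)
  exact (hcont.tendsto x).eventually_lt_const (by simpa using hδ)

variable [MeasurableSpace X] [SecondCountableTopology X]

theorem measure_fixedPoints_zpow_eq_zero (hf : Continuous f) (μ : Measure X)
    (hexp : ∀ x : X, ∃ δ > 0, μ (Gamma f δ x) = 0) {m : ℕ} (hm : 0 < m) :
    μ (Function.fixedPoints ⇑(f ^ (m : ℤ))) = 0 := by
  refine measure_null_of_locally_null _ fun x hx => ?_
  obtain ⟨δ, hδ, hΓ⟩ := hexp x
  have hnear := eventually_dist_zpow_apply_lt hf m hδ x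
  refine ⟨_, inter_mem_nhdsWithin _ hnear, measure_mono_null ?_ hΓ⟩
  rintro y ⟨hy, hxy⟩
  exact mem_Gamma_of_isFixedPt_zpow hm hx hy fun k hk => (hxy k hk).le

end

theorem stmt_7_general {X : Type*} [MetricSpace X] [TopologicalSpace.SeparableSpace X]
    [MeasurableSpace X]
    (f : Equiv.Perm X) (hf : UniformContinuous f)
    (μ : Measure X)
    (hexp : ∀ x : X, ∃ δ > 0, μ (Gamma f δ x) = 0) :
    μ (PerSet f) = 0 := by
  have hPer : PerSet f ⊆ ⋃ m : ℕ, Function.fixedPoints ⇑(f ^ ((m + 1 : ℕ) : ℤ)) := by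
    rintro x ⟨m, hm, hx⟩
    obtain ⟨k, rfl⟩ := Nat.exists_eq_add_of_le' hm
    exact Set.mem_iUnion.mpr ⟨k, hx⟩
  exact measure_mono_null hPer <| measure_iUnion_null fun m =>
    measure_fixedPoints_zpow_eq_zero hf.continuous μ hexp m.succ_pos

theorem stmt_7 {X : Type*} [MetricSpace X] [TopologicalSpace.SeparableSpace X]
    [MeasurableSpace X] [BorelSpace X]
    (f : Equiv.Perm X) (hf : UniformContinuous f) (hf' : UniformContinuous f.symm)
    (μ : Measure X) (hμna : ∀ x : X, μ {x} = 0)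
    (hexp : ∀ x : X, ∃ δ > 0, μ (Gamma f δ x) = 0) :
    μ (PerSet f) = 0 :=
  stmt_7_general f hf μ hexp
end

section
/- The set of periodic points of a pointwise measure expansive uniform equivalence of a separable complete metric space is at most countable. -/
open MeasureTheory

open Filter Topology

/-! A fixed point `x` of `f ^ m` has an orbit determined by its first `m` iterates, and so has every
fixed point `y` of `f ^ m`; continuity of these finitely many iterates therefore makes `Gamma f δ x`
a neighbourhood of `x` relative to `Fix (f ^ m)`. Measure expansivity makes these sets null for
every non-atomic measure, hence by second countability so is `Fix (f ^ m)`. Since an uncountable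
closed subset of a Polish space carries a non-atomic probability measure (a Borel isomorphic copy
of Lebesgue measure on `[0, 1]`), each `Fix (f ^ m)` is countable. -/

theorem exists_nullSingletonClass_measure_ne_zero_of_isClosed {X : Type*} [TopologicalSpace X]
    [PolishSpace X] [MeasurableSpace X] [BorelSpace X] {S : Set X} (hS : IsClosed S)
    (hSc : ¬ S.Countable) : ∃ μ : Measure X, NullSingletonClass μ ∧ μ S ≠ 0 := by
  have : PolishSpace S := hS.polishSpace
  have hI : ¬ Countable unitInterval := fun h ↦ by
    simpa using Set.countable_univ.measure_zero (volume : Measure unitInterval)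
  let e : unitInterval ≃ᵐ S :=
    PolishSpace.measurableEquivOfNotCountable hI (Set.countable_coe_iff.not.2 hSc)
  have he : Measurable ((↑) ∘ e : unitInterval → X) := measurable_subtype_coe.comp e.measurable
  refine ⟨volume.map ((↑) ∘ e), ⟨fun z ↦ ?_⟩, ?_⟩
  · rw [Measure.map_apply he (measurableSet_singleton z)]
    exact ((Set.subsingleton_singleton.preimage Subtype.val_injective).preimage
      e.injective).measure_zero _
  · rw [Measure.map_apply he hS.measurableSet, Set.preimage_comp, Subtype.coe_preimage_self,
      Set.preimage_univ, measure_univ]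
    exact one_ne_zero

theorem Equiv.Perm.zpow_emod_apply {α : Type*} {f : Equiv.Perm α} {m : ℕ} {x : α}
    (hx : (f ^ (m : ℤ)) x = x) (n : ℤ) : (f ^ (n % (m : ℤ))) x = (f ^ n) x := by
  conv_rhs => rw [← Int.emod_add_mul_ediv n m, zpow_add, zpow_mul, Equiv.Perm.mul_apply,
    Equiv.Perm.zpow_apply_eq_self_of_apply_eq_self hx]

theorem Equiv.Perm.continuous_zpow_natCast {X : Type*} [TopologicalSpace X] {f : Equiv.Perm X}
    (hf : Continuous f) (j : ℕ) : Continuous (f ^ (j : ℤ)) := by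
  simpa only [zpow_natCast, Equiv.Perm.coe_pow] using hf.iterate j

section Expansive

variable {X : Type*} [MetricSpace X] {f : Equiv.Perm X}

theorem Gamma_mem_nhdsWithin_setOf_zpow_apply_eq (hf : Continuous f) {m : ℕ} (hm : 0 < m)
    {x : X} (hx : (f ^ (m : ℤ)) x = x) {δ : ℝ} (hδ : 0 < δ) :
    Gamma f δ x ∈ 𝓝[{y | (f ^ (m : ℤ)) y = y}] x := by
  have hnear : ∀ᶠ y in 𝓝 x, ∀ j : Fin m,
      (f ^ (j : ℤ)) y ∈ Metric.closedBall ((f ^ (j : ℤ)) x) δ :=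
    eventually_all.2 fun j ↦ (Equiv.Perm.continuous_zpow_natCast hf j).continuousAt.eventually
      (Metric.closedBall_mem_nhds _ hδ)
  rw [← eventually_mem_set, eventually_nhdsWithin_iff]
  filter_upwards [hnear] with y hy hyx n
  rw [← Equiv.Perm.zpow_emod_apply hx, ← Equiv.Perm.zpow_emod_apply hyx]
  have hr : 0 ≤ n % (m : ℤ) := Int.emod_nonneg n (by omega)
  have hrm : n % (m : ℤ) < m := Int.emod_lt_of_pos n (by omega)
  have := Metric.mem_closedBall'.1 (hy ⟨(n % (m : ℤ)).toNat, by omega⟩)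
  rwa [Fin.val_mk, Int.toNat_of_nonneg hr] at this

theorem countable_setOf_zpow_apply_eq [TopologicalSpace.SeparableSpace X] [CompleteSpace X]
    [MeasurableSpace X] [BorelSpace X] (hf : Continuous f)
    (hexp : ∀ x : X, ∃ δ > 0, ∀ μ : Measure X, (∀ z : X, μ {z} = 0) → μ (Gamma f δ x) = 0)
    {m : ℕ} (hm : 0 < m) : {x | (f ^ (m : ℤ)) x = x}.Countable := by
  by_contra hS
  have hclosed : IsClosed {x | (f ^ (m : ℤ)) x = x} :=
    isClosed_eq (Equiv.Perm.continuous_zpow_natCast hf m) continuous_id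
  obtain ⟨μ, hμ, hμS⟩ := exists_nullSingletonClass_measure_ne_zero_of_isClosed hclosed hS
  refine hμS (measure_null_of_locally_null _ fun x hx ↦ ?_)
  obtain ⟨δ, hδ, hnull⟩ := hexp x
  exact ⟨Gamma f δ x, Gamma_mem_nhdsWithin_setOf_zpow_apply_eq hf hm hx hδ,
    hnull μ measure_singleton⟩

end Expansive

theorem stmt_8_general {X : Type*} [MetricSpace X] [TopologicalSpace.SeparableSpace X]
    [CompleteSpace X] [MeasurableSpace X] [BorelSpace X]
    (f : Equiv.Perm X) (hf : UniformContinuous f)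
    (hexp : ∀ x : X, ∃ δ > 0, ∀ μ : Measure X,
      (∀ z : X, μ {z} = 0) → μ (Gamma f δ x) = 0) :
    (PerSet f).Countable := by
  refine (Set.countable_iUnion fun k : ℕ ↦
    countable_setOf_zpow_apply_eq hf.continuous hexp k.succ_pos).mono ?_
  rintro x ⟨m, hm, hx⟩
  obtain ⟨k, rfl⟩ := Nat.exists_eq_add_of_le' hm
  exact Set.mem_iUnion.2 ⟨k, hx⟩

theorem stmt_8 {X : Type*} [MetricSpace X] [TopologicalSpace.SeparableSpace X]
    [CompleteSpace X] [MeasurableSpace X] [BorelSpace X]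
    (f : Equiv.Perm X) (hf : UniformContinuous f) (hf' : UniformContinuous f.symm)
    (hexp : ∀ x : X, ∃ δ > 0, ∀ μ : Measure X,
      (∀ z : X, μ {z} = 0) → μ (Gamma f δ x) = 0) :
    (PerSet f).Countable :=
  stmt_8_general f hf hexp
end

section
/- Let f be a bi-measurable bijection of a separable metric space X, and μ a pointwise expansive outer regular measure for f. Then for any p, q ∈ X, the set A_f(p,q) of points positively asymptotic to p and negatively asymptotic to q has μ-measure zero. -/
/-!
Fix `δ > 0` below the expansivity constant of a point `y ∈ A_f(p, q)` and times `N`, `M` after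
which the forward orbit of `y` is `δ/2`-close to that of `p` and the backward orbit `δ/2`-close to
that of `q`. Two such points whose orbits are also `δ`-close at the finitely many times in between
lie in each other's `Γ_δ`. By separability, countably many cells of the finite orbit windows cover
everything, and each cell lies inside a null set `Γ_δ(y₀)`. Taking `δ = 1/(m+1)` makes the
whole union countable.
-/

open MeasureTheory

/-- `A_f(p, q)`: points positively asymptotic to `p` and negatively asymptotic to `q`. -/
def asymptoticSet {X : Type*} [MetricSpace X] (f : Equiv.Perm X) (p q : X) : Set X :=
  {y | (∀ ε > 0, ∃ N : ℕ, ∀ n : ℤ, (N : ℤ) ≤ n → dist ((f ^ n) p) ((f ^ n) y) < ε) ∧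
    (∀ ε > 0, ∃ M : ℕ, ∀ n : ℤ, n ≤ -(M : ℤ) → dist ((f ^ n) q) ((f ^ n) y) < ε)}

theorem MeasureTheory.measure_null_of_forall_inter_preimage_ball_null {α Y : Type*}
    [MeasurableSpace α] [PseudoMetricSpace Y] [TopologicalSpace.SeparableSpace Y]
    {μ : Measure α} (g : α → Y) {s : Set α} {r : ℝ} (hr : 0 < r)
    (h : ∀ x ∈ s, μ (s ∩ g ⁻¹' Metric.ball (g x) r) = 0) : μ s = 0 := by
  rcases s.eq_empty_or_nonempty with rfl | ⟨x, -⟩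
  · exact measure_empty
  have : Nonempty Y := ⟨g x⟩
  obtain ⟨D, hD⟩ := TopologicalSpace.exists_dense_seq Y
  have hcover : s ⊆ ⋃ k, s ∩ g ⁻¹' Metric.ball (D k) (r / 2) := fun y hy ↦ by
    obtain ⟨k, hk⟩ := hD.exists_dist_lt (g y) (half_pos hr)
    exact Set.mem_iUnion.2 ⟨k, hy, hk⟩
  refine measure_mono_null hcover (measure_iUnion_null fun k ↦ ?_)
  rcases (s ∩ g ⁻¹' Metric.ball (D k) (r / 2)).eq_empty_or_nonempty with
    hk | ⟨x₀, hx₀s, hx₀⟩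
  · rw [hk, measure_empty]
  refine measure_mono_null ?_ (h x₀ hx₀s)
  rintro y ⟨hys, hy⟩
  refine ⟨hys, ?_⟩
  rw [Set.mem_preimage, Metric.mem_ball] at hx₀ hy ⊢
  linarith [dist_triangle_right (g y) (g x₀) (D k)]

namespace Equiv.Perm

variable {X : Type*} [MetricSpace X] (f : Equiv.Perm X)

theorem Gamma_mono {δ δ' : ℝ} (h : δ ≤ δ') (x : X) : Gamma f δ x ⊆ Gamma f δ' x :=
  fun _ hy n ↦ (hy n).trans h

/-- The orbit of `y` at the times `-M, …, N - 1`. -/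
def orbitWindow (M N : ℕ) (y : X) : Fin (M + N) → X :=
  fun i ↦ (f ^ ((i : ℤ) - M)) y

def asymptoticPiece (p q : X) (ε : ℝ) (N M : ℕ) : Set X :=
  {y | (∀ n : ℤ, (N : ℤ) ≤ n → dist ((f ^ n) p) ((f ^ n) y) < ε) ∧
    (∀ n : ℤ, n ≤ -(M : ℤ) → dist ((f ^ n) q) ((f ^ n) y) < ε)}

theorem asymptoticSet_subset_iUnion_asymptoticPiece (p q : X) {ε : ℝ} (hε : 0 < ε) :
    asymptoticSet f p q ⊆ ⋃ (N : ℕ) (M : ℕ), asymptoticPiece f p q ε N M := by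
  rintro _ ⟨hp, hq⟩
  obtain ⟨N, hN⟩ := hp ε hε
  obtain ⟨M, hM⟩ := hq ε hε
  exact Set.mem_iUnion₂.2 ⟨N, M, hN, hM⟩

theorem mem_Gamma_of_dist_orbitWindow_lt {p q y z : X} {δ : ℝ} {N M : ℕ}
    (hy : y ∈ asymptoticPiece f p q (δ / 2) N M) (hz : z ∈ asymptoticPiece f p q (δ / 2) N M)
    (hyz : dist (orbitWindow f M N y) (orbitWindow f M N z) < δ) : z ∈ Gamma f δ y := by
  intro n
  by_cases hN : (N : ℤ) ≤ n
  · have := dist_triangle_left ((f ^ n) y) ((f ^ n) z) ((f ^ n) p)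
    linarith [hy.1 n hN, hz.1 n hN]
  by_cases hM : n ≤ -(M : ℤ)
  · have := dist_triangle_left ((f ^ n) y) ((f ^ n) z) ((f ^ n) q)
    linarith [hy.2 n hM, hz.2 n hM]
  let i : Fin (M + N) := ⟨(n + M).toNat, by omega⟩
  have hi : (i : ℤ) - M = n := by simp only [i]; omega
  have := dist_le_pi_dist (orbitWindow f M N y) (orbitWindow f M N z) i
  simp only [orbitWindow, hi] at this
  linarith

variable [TopologicalSpace.SeparableSpace X] [MeasurableSpace X]

theorem measure_asymptoticPiece_inter_setOf_measure_Gamma_eq_zero (μ : Measure X)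
    (p q : X) {δ : ℝ} (hδ : 0 < δ) (N M : ℕ) :
    μ (asymptoticPiece f p q (δ / 2) N M ∩ {y | μ (Gamma f δ y) = 0}) = 0 :=
  measure_null_of_forall_inter_preimage_ball_null (orbitWindow f M N) hδ fun _ ⟨hy, hyΓ⟩ ↦
    measure_mono_null (fun _ ⟨⟨hz, _⟩, hyz⟩ ↦
      mem_Gamma_of_dist_orbitWindow_lt f hy hz (Metric.mem_ball'.1 hyz)) hyΓ

end Equiv.Perm

open Equiv.Perm in
theorem stmt_9_general {X : Type*} [MetricSpace X] [TopologicalSpace.SeparableSpace X]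
    [MeasurableSpace X]
    (f : Equiv.Perm X) (μ : Measure X)
    (hexp : ∀ x : X, ∃ δ > 0, μ (Gamma f δ x) = 0)
    (p q : X) :
    μ (asymptoticSet f p q) = 0 := by
  set δ : ℕ → ℝ := fun m ↦ 1 / (m + 1)
  have hδ (m : ℕ) : 0 < δ m := Nat.one_div_pos_of_nat
  have hcover : asymptoticSet f p q ⊆ ⋃ (m : ℕ) (N : ℕ) (M : ℕ),
      asymptoticPiece f p q (δ m / 2) N M ∩ {y | μ (Gamma f (δ m) y) = 0} := by
    intro y hy
    obtain ⟨δ₀, hδ₀, hΓ⟩ := hexp y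
    obtain ⟨m, hm⟩ := exists_nat_one_div_lt hδ₀
    obtain ⟨N, M, hNM⟩ := Set.mem_iUnion₂.1 <|
      asymptoticSet_subset_iUnion_asymptoticPiece f p q (half_pos (hδ m)) hy
    exact Set.mem_iUnion.2 ⟨m, Set.mem_iUnion₂.2
      ⟨N, M, hNM, measure_mono_null (Gamma_mono f hm.le y) hΓ⟩⟩
  refine measure_mono_null hcover <| measure_iUnion_null fun m ↦ measure_iUnion_null fun N ↦
    measure_iUnion_null fun M ↦ ?_
  exact measure_asymptoticPiece_inter_setOf_measure_Gamma_eq_zero f μ p q (hδ m) N M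

theorem stmt_9 {X : Type*} [MetricSpace X] [TopologicalSpace.SeparableSpace X]
    [MeasurableSpace X] [BorelSpace X]
    (f : Equiv.Perm X) (μ : Measure X) [μ.OuterRegular]
    (hμna : ∀ x : X, μ {x} = 0)
    (hexp : ∀ x : X, ∃ δ > 0, μ (Gamma f δ x) = 0)
    (p q : X) :
    μ (asymptoticSet f p q) = 0 :=
  stmt_9_general f μ hexp p q
end

section
/- Every stable set W^s(x) of a measurable map f on a separable metric space X has measure zero with respect to any positively pointwise expansive outer regular Borel measure μ. -/
open MeasureTheory

/-- The stable set of `x` under `f`. -/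
def stableSet {X : Type*} [MetricSpace X] (f : X → X) (x : X) : Set X :=
  {y | ∀ ε > 0, ∃ n : ℕ, ∀ i : ℕ, n ≤ i → dist (f^[i] x) (f^[i] y) ≤ ε}

/-!
If the orbits of `y` and `z` both stay `ε`-close to that of `x` from time `N` on, the triangle
inequality through the orbit of `x` makes them `2ε`-close at all times `≥ N`. So, among such
points, those whose first `N` iterates are `2ε`-close to those of `y` lie in the closed Bowen ball
of radius `2ε` about `y`. If that ball is null for every such `y`, second countability of
`Fin N → X` leaves countably many null pieces; countably many choices of `N` and `ε = 1 / (m + 1)`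
then exhaust the stable set.
-/

open Metric Set Filter Topology

lemma measure_null_of_forall_nhds_preimage_null {X Y : Type*} [MeasurableSpace X]
    [TopologicalSpace Y] [SecondCountableTopology Y] (μ : Measure X) (g : X → Y) {s : Set X}
    (h : ∀ y ∈ s, ∃ U ∈ 𝓝 (g y), μ (s ∩ g ⁻¹' U) = 0) : μ s = 0 := by
  choose! U hU hnull using h
  obtain ⟨T, hTs, hTc, hTU⟩ :=
    TopologicalSpace.isOpen_biUnion_countable s (fun y => interior (U y))
      fun _ _ => isOpen_interior
  have hcover : s ⊆ ⋃ y ∈ T, s ∩ g ⁻¹' U y := by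
    intro z hz
    have : g z ∈ ⋃ y ∈ T, interior (U y) :=
      hTU ▸ mem_biUnion hz (mem_interior_iff_mem_nhds.2 (hU z hz))
    obtain ⟨y, hyT, hy⟩ := mem_iUnion₂.1 this
    exact mem_biUnion hyT ⟨hz, (interior_subset hy : g z ∈ U y)⟩
  exact measure_mono_null hcover <| (measure_biUnion_null_iff hTc).2 fun y hy => hnull y (hTs hy)

section Bowen

variable {X : Type*} [MetricSpace X]

def bowenClosedBall (f : X → X) (y : X) (δ : ℝ) : Set X :=
  {z | ∀ n : ℕ, dist (f^[n] y) (f^[n] z) ≤ δ}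

lemma bowenClosedBall_mono (f : X → X) (y : X) {δ δ' : ℝ} (h : δ ≤ δ') :
    bowenClosedBall f y δ ⊆ bowenClosedBall f y δ' :=
  fun _ hz n => (hz n).trans h

def tailClosedBall (f : X → X) (x : X) (N : ℕ) (ε : ℝ) : Set X :=
  {y | ∀ i, N ≤ i → dist (f^[i] x) (f^[i] y) ≤ ε}

lemma stableSet_subset_iUnion_tailClosedBall (f : X → X) (x : X) {ε : ℝ} (hε : 0 < ε) :
    stableSet f x ⊆ ⋃ N, tailClosedBall f x N ε :=
  fun _ hy => mem_iUnion.2 (hy ε hε)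

lemma tailClosedBall_inter_preimage_ball_subset_bowenClosedBall (f : X → X) (x : X) (N : ℕ)
    (ε : ℝ) {y : X} (hy : y ∈ tailClosedBall f x N ε) :
    tailClosedBall f x N ε ∩ (fun z (i : Fin N) => f^[i] z) ⁻¹' ball (fun i => f^[i] y) (2 * ε) ⊆
      bowenClosedBall f y (2 * ε) := by
  rintro z ⟨hz, hzy⟩ n
  rcases lt_or_ge n N with hn | hn
  · rw [dist_comm]
    exact (dist_le_pi_dist _ _ (⟨n, hn⟩ : Fin N)).trans (mem_ball.1 hzy).le
  · calc dist (f^[n] y) (f^[n] z) ≤ dist (f^[n] x) (f^[n] y) + dist (f^[n] x) (f^[n] z) :=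
          dist_triangle_left _ _ _
      _ ≤ 2 * ε := by linarith [hy n hn, hz n hn]

variable [TopologicalSpace.SeparableSpace X] [MeasurableSpace X]

lemma measure_tailClosedBall_inter_null (f : X → X) (x : X) (μ : Measure X) (N : ℕ) {ε : ℝ}
    (hε : 0 < ε) :
    μ (tailClosedBall f x N ε ∩ {y | μ (bowenClosedBall f y (2 * ε)) = 0}) = 0 := by
  refine measure_null_of_forall_nhds_preimage_null μ (fun z (i : Fin N) => f^[i] z) ?_
  rintro y ⟨hy, hnull⟩
  refine ⟨_, ball_mem_nhds _ (by positivity : (0 : ℝ) < 2 * ε), measure_mono_null ?_ hnull⟩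
  exact (inter_subset_inter_left _ inter_subset_left).trans
    (tailClosedBall_inter_preimage_ball_subset_bowenClosedBall f x N ε hy)

end Bowen

theorem stmt_10_general {X : Type*} [MetricSpace X] [TopologicalSpace.SeparableSpace X]
    [MeasurableSpace X]
    (f : X → X)
    (μ : Measure X)
    (hexp : ∀ x : X, ∃ δ > 0,
      μ {y | ∀ n : ℕ, dist (f^[n] x) (f^[n] y) ≤ δ} = 0)
    (x : X) :
    μ (stableSet f x) = 0 := by
  have hcover : stableSet f x ⊆ ⋃ (m : ℕ) (N : ℕ), tailClosedBall f x N (1 / (m + 1)) ∩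
      {y | μ (bowenClosedBall f y (2 * (1 / (m + 1)))) = 0} := by
    intro y hy
    obtain ⟨δ, hδ, hnull⟩ := hexp y
    obtain ⟨m, hm⟩ := exists_nat_one_div_lt (half_pos hδ)
    obtain ⟨N, hN⟩ :=
      mem_iUnion.1 (stableSet_subset_iUnion_tailClosedBall f x Nat.one_div_pos_of_nat hy)
    refine mem_iUnion₂.2 ⟨m, N, hN, measure_mono_null (bowenClosedBall_mono f y ?_) hnull⟩
    linarith
  exact measure_mono_null hcover <| measure_iUnion_null fun m => measure_iUnion_null fun N =>
    measure_tailClosedBall_inter_null f x μ N Nat.one_div_pos_of_nat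

theorem stmt_10 {X : Type*} [MetricSpace X] [TopologicalSpace.SeparableSpace X]
    [MeasurableSpace X] [BorelSpace X]
    (f : X → X) (hf : Measurable f)
    (μ : Measure X) [μ.OuterRegular]
    (hμna : ∀ x : X, μ {x} = 0)
    (hexp : ∀ x : X, ∃ δ > 0,
      μ {y | ∀ n : ℕ, dist (f^[n] x) (f^[n] y) ≤ δ} = 0)
    (x : X) :
    μ (stableSet f x) = 0 :=
  stmt_10_general f μ hexp x
end

section
/- If a bi-measurable bijection f on a metric space X has canonical coordinates and admits a strictly positive positively pointwise expansive Borel measure μ, then no point of X is a sink. -/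
open MeasureTheory

/-- The local stable set `W^s(x, ε)` of `x` under a bijection `f`. -/
def localStable {X : Type*} [MetricSpace X] (f : Equiv.Perm X) (x : X) (ε : ℝ) : Set X :=
  {y | ∀ i : ℕ, dist ((f ^ (i : ℤ)) x) ((f ^ (i : ℤ)) y) ≤ ε}

/-- The local unstable set `W^u(x, ε)` of `x` under a bijection `f`. -/
def localUnstable {X : Type*} [MetricSpace X] (f : Equiv.Perm X) (x : X) (ε : ℝ) : Set X :=
  {y | ∀ i : ℕ, dist ((f ^ (-(i : ℤ))) x) ((f ^ (-(i : ℤ))) y) ≤ ε}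

open Topology

/-!
If `x` were a sink, the canonical-coordinates point of `W^s(y, ε) ∩ W^u(x, ε)` for `y` near `x`
would be `x` itself, so every `y` near `x` lies in `W^s(x, ε)`: the local stable set of `x` is a
neighbourhood of `x`. A strictly positive measure gives it positive mass, contradicting
positive pointwise expansivity.
-/

section

variable {X : Type*} [MetricSpace X]

def HasCanonicalCoordinates (f : Equiv.Perm X) : Prop :=
  ∀ ε > 0, ∃ δ > 0, ∀ x y : X, dist x y < δ → (localStable f x ε ∩ localUnstable f y ε).Nonempty

def IsSink (f : Equiv.Perm X) (x : X) : Prop :=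
  ∃ δ > 0, localUnstable f x δ = {x}

lemma localStable_mono (f : Equiv.Perm X) (x : X) {ε ε' : ℝ} (h : ε ≤ ε') :
    localStable f x ε ⊆ localStable f x ε' :=
  fun _ hy i => (hy i).trans h

lemma localUnstable_mono (f : Equiv.Perm X) (x : X) {ε ε' : ℝ} (h : ε ≤ ε') :
    localUnstable f x ε ⊆ localUnstable f x ε' :=
  fun _ hy i => (hy i).trans h

lemma mem_localStable_comm {f : Equiv.Perm X} {x y : X} {ε : ℝ} :
    y ∈ localStable f x ε ↔ x ∈ localStable f y ε := by
  simp only [localStable, Set.mem_ofPred_eq, dist_comm]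

lemma HasCanonicalCoordinates.localStable_mem_nhds_of_isSink {f : Equiv.Perm X}
    (hcc : HasCanonicalCoordinates f) {x : X} (hx : IsSink f x) {ε : ℝ} (hε : 0 < ε) :
    localStable f x ε ∈ 𝓝 x := by
  obtain ⟨δ, hδ, hsink⟩ := hx
  obtain ⟨r, hr, hmeet⟩ := hcc (min δ ε) (lt_min hδ hε)
  refine Metric.mem_nhds_iff.mpr ⟨r, hr, fun y hy => ?_⟩
  obtain ⟨z, hzs, hzu⟩ := hmeet y x (Metric.mem_ball.mp hy)
  have hzx : z ∈ localUnstable f x δ := localUnstable_mono f x (min_le_left δ ε) hzu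
  rw [hsink, Set.mem_singleton_iff] at hzx
  subst hzx
  exact mem_localStable_comm.mp (localStable_mono f y (min_le_right δ ε) hzs)

end

theorem stmt_11_general {X : Type*} [MetricSpace X] [MeasurableSpace X]
    (f : Equiv.Perm X)
    (hcc : ∀ ε > 0, ∃ δ > 0, ∀ x y : X, dist x y < δ →
      (localStable f x ε ∩ localUnstable f y ε).Nonempty)
    (μ : Measure X)
    (hpos : ∀ U : Set X, IsOpen U → U.Nonempty → 0 < μ U)
    (hexp : ∀ x : X, ∃ δ > 0, μ (localStable f x δ) = 0) :
    ∀ x : X, ¬ ∃ δ > 0, localUnstable f x δ = {x} := by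
  intro x hsink
  have : μ.IsOpenPosMeasure := ⟨fun U hU hne => (hpos U hU hne).ne'⟩
  obtain ⟨ε, hε, hnull⟩ := hexp x
  have hnhds : localStable f x ε ∈ 𝓝 x :=
    HasCanonicalCoordinates.localStable_mem_nhds_of_isSink hcc hsink hε
  exact (Measure.measure_pos_of_mem_nhds μ hnhds).ne' hnull

theorem stmt_11 {X : Type*} [MetricSpace X] [MeasurableSpace X] [BorelSpace X]
    (f : Equiv.Perm X)
    (hcc : ∀ ε > 0, ∃ δ > 0, ∀ x y : X, dist x y < δ →
      (localStable f x ε ∩ localUnstable f y ε).Nonempty)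
    (μ : Measure X)
    (hpos : ∀ U : Set X, IsOpen U → U.Nonempty → 0 < μ U)
    (hexp : ∀ x : X, ∃ δ > 0, μ (localStable f x δ) = 0) :
    ∀ x : X, ¬ ∃ δ > 0, localUnstable f x δ = {x} :=
  stmt_11_general f hcc μ hpos hexp
end

section
/- If a bi-measurable map f on a metric space X is pointwise N-expansive, then f is pointwise expansive. -/
open Metric Topology

theorem Set.Finite.exists_pos_inter_closedBall_subset_singleton {α : Type*} [MetricSpace α]
    {s : Set α} (hs : s.Finite) (x : α) : ∃ ε > 0, s ∩ closedBall x ε ⊆ {x} := by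
  have hnhds : (s \ {x})ᶜ ∈ 𝓝 x :=
    hs.sdiff.isClosed.isOpen_compl.mem_nhds fun hx => hx.2 rfl
  obtain ⟨ε, hε, hball⟩ := nhds_basis_closedBall.mem_iff.1 hnhds
  refine ⟨ε, hε, fun y ⟨hys, hyx⟩ => ?_⟩
  by_contra hne
  exact hball hyx ⟨hys, hne⟩

section Gamma

variable {X : Type*} [MetricSpace X] {f : Equiv.Perm X} {δ ε : ℝ} {x y : X}

theorem Gamma_mono (h : δ ≤ ε) : Gamma f δ x ⊆ Gamma f ε x :=
  fun _ hy n => (hy n).trans h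

theorem mem_Gamma_self (hδ : 0 ≤ δ) : x ∈ Gamma f δ x := by
  simp [Gamma, hδ]

theorem dist_le_of_mem_Gamma (hy : y ∈ Gamma f δ x) : dist y x ≤ δ := by
  simpa [dist_comm] using hy 0

theorem exists_Gamma_eq_singleton_of_finite (hδ : 0 < δ) (hfin : (Gamma f δ x).Finite) :
    ∃ ε > 0, Gamma f ε x = {x} := by
  obtain ⟨r, hr, hsep⟩ := hfin.exists_pos_inter_closedBall_subset_singleton x
  refine ⟨min δ r, lt_min hδ hr, ?_⟩
  refine Set.Subset.antisymm (fun y hy => hsep ⟨?_, ?_⟩) ?_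
  · exact Gamma_mono (min_le_left δ r) hy
  · exact mem_closedBall.2 ((dist_le_of_mem_Gamma hy).trans (min_le_right δ r))
  · exact Set.singleton_subset_iff.2 (mem_Gamma_self (lt_min hδ hr).le)

end Gamma

theorem stmt_13 {X : Type*} [MetricSpace X] (f : Equiv.Perm X) (N : ℕ)
    (hN : ∀ x : X, ∃ δ > 0, (Gamma f δ x).encard ≤ N) :
    ∀ x : X, ∃ ε > 0, Gamma f ε x = {x} := by
  intro x
  obtain ⟨δ, hδ, hcard⟩ := hN x
  exact exists_Gamma_eq_singleton_of_finite hδ (Set.finite_of_encard_le_coe hcard)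
end

section
/- Every specification point of a continuous map f on a metric space X is a topologically mixing point of f. -/
/-! Given `x ∈ U` and `v ∈ V`, surjectivity gives `z` with `f^[n] z = v`. The one-point orbit
segments `x` at time `0` and `z` at time `n` are `M`-separated once `n ≥ M`, so specification
yields `y` close to `x` with `f^[n] y` close to `v`, i.e. `f^[n] y ∈ f^[n] '' U ∩ V`. -/

/-- `x` is a specification point of `f`. -/
def SpecPoint {X : Type*} [MetricSpace X] (f : X → X) (x : X) : Prop :=
  ∀ ε > 0, ∃ M : ℕ, ∀ (k : ℕ) (xs : ℕ → X) (a b : ℕ → ℕ), 1 ≤ k → xs 1 = x →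
    (∀ j, 1 ≤ j → j ≤ k → a j ≤ b j) →
    (∀ j, 2 ≤ j → j ≤ k → b (j - 1) + M ≤ a j) →
    ∃ y : X, ∀ j, 1 ≤ j → j ≤ k → ∀ i, a j ≤ i → i ≤ b j →
      dist (f^[i] y) (f^[i] (xs j)) < ε

/-- `x` is a topologically mixing point of `f`. -/
def MixingPoint {X : Type*} [MetricSpace X] (f : X → X) (x : X) : Prop :=
  ∀ U : Set X, IsOpen U → x ∈ U → ∀ V : Set X, IsOpen V → V.Nonempty →
    ∃ N : ℕ, ∀ n : ℕ, N ≤ n → (f^[n] '' U ∩ V).Nonempty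

theorem SpecPoint.exists_dist_lt_and_iterate_dist_lt {X : Type*} [MetricSpace X] {f : X → X}
    {x : X} (hx : SpecPoint f x) {ε : ℝ} (hε : 0 < ε) :
    ∃ M : ℕ, ∀ n, M ≤ n → ∀ z : X, ∃ y, dist y x < ε ∧ dist (f^[n] y) (f^[n] z) < ε := by
  obtain ⟨M, hM⟩ := hx ε hε
  refine ⟨M, fun n hn z => ?_⟩
  let times : ℕ → ℕ := fun j => if j = 2 then n else 0
  have separated : ∀ j, 2 ≤ j → j ≤ 2 → times (j - 1) + M ≤ times j := by
    intro j h2 hk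
    obtain rfl : j = 2 := by omega
    simpa [times] using hn
  obtain ⟨y, hy⟩ := hM 2 (fun j => if j = 2 then z else x) times times one_le_two rfl
    (fun _ _ _ => le_rfl) separated
  exact ⟨y, by simpa [times] using hy 1 le_rfl one_le_two 0 le_rfl le_rfl,
    by simpa [times] using hy 2 one_le_two le_rfl n le_rfl le_rfl⟩

theorem stmt_15_general {X : Type*} [MetricSpace X] (f : X → X)
    (hsurj : Function.Surjective f) (x : X) (hx : SpecPoint f x) :
    MixingPoint f x := by
  intro U hU hxU V hV ⟨v, hvV⟩
  obtain ⟨εU, hεU, hballU⟩ := Metric.isOpen_iff.mp hU x hxU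
  obtain ⟨εV, hεV, hballV⟩ := Metric.isOpen_iff.mp hV v hvV
  obtain ⟨M, hM⟩ := hx.exists_dist_lt_and_iterate_dist_lt (lt_min hεU hεV)
  refine ⟨M, fun n hn => ?_⟩
  obtain ⟨z, rfl⟩ := hsurj.iterate n v
  obtain ⟨y, hyx, hyz⟩ := hM n hn z
  exact ⟨f^[n] y, Set.mem_image_of_mem _ (hballU (hyx.trans_le (min_le_left _ _))),
    hballV (hyz.trans_le (min_le_right _ _))⟩

theorem stmt_15 {X : Type*} [MetricSpace X] (f : X → X) (hf : Continuous f)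
    (hsurj : Function.Surjective f) (x : X) (hx : SpecPoint f x) :
    MixingPoint f x :=
  stmt_15_general f hsurj x hx
end

section
/- If f is a topologically mixing continuous map on a totally bounded metric space X, then every shadowable point of f is a specification point of f. -/
/-!
Given `ε`, let `δ` be the shadowing constant of `x`. Total boundedness makes mixing uniform at
scale `δ`: there is `N` such that any point can be joined to any other by a `δ`-jump followed by
`n ≥ N` steps of a true orbit ending `δ`-close to the target. Concatenating the orbit segments
of the `xⱼ` with such bridges gives a `δ`-pseudo orbit through `x`, and any point shadowing it traces
all the segments at once.
-/

/-- `x` is a shadowable point of `f`: every pseudo-orbit through `x` can be traced. -/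
def ShadowablePoint {X : Type*} [MetricSpace X] (f : X → X) (x : X) : Prop :=
  ∀ ε > 0, ∃ δ > 0, ∀ u : ℕ → X, u 0 = x →
    (∀ i : ℕ, dist (f (u i)) (u (i + 1)) < δ) →
    ∃ z : X, ∀ i : ℕ, dist (f^[i] z) (u i) < ε

open Filter Metric

section PseudoOrbit

variable {X : Type*} [PseudoMetricSpace X]

def IsPseudoOrbit (f : X → X) (δ : ℝ) (u : ℕ → X) : Prop :=
  ∀ i, dist (f (u i)) (u (i + 1)) < δ

def appendAt {α : Type*} (u : ℕ → α) (T : ℕ) (v : ℕ → α) : ℕ → α :=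
  fun i => if i ≤ T then u i else v (i - (T + 1))

section appendAt

variable {α : Type*} {u v : ℕ → α} {T i : ℕ}

@[simp]
lemma appendAt_of_le (h : i ≤ T) : appendAt u T v i = u i := if_pos h

@[simp]
lemma appendAt_of_lt (h : T < i) : appendAt u T v i = v (i - (T + 1)) := if_neg (by omega)

end appendAt

lemma isPseudoOrbit_iterate {f : X → X} {δ : ℝ} (hδ : 0 < δ) (y : X) :
    IsPseudoOrbit f δ (fun i => f^[i] y) := fun i => by
  simpa only [Function.iterate_succ_apply', dist_self] using hδ

lemma IsPseudoOrbit.appendAt {f : X → X} {δ : ℝ} {u v : ℕ → X} (hu : IsPseudoOrbit f δ u)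
    (hv : IsPseudoOrbit f δ v) (T : ℕ) (hT : dist (f (u T)) (v 0) < δ) :
    IsPseudoOrbit f δ (appendAt u T v) := by
  intro i
  rcases lt_trichotomy i T with h | rfl | h
  · simpa [h.le, Nat.succ_le_of_lt h] using hu i
  · simpa using hT
  · have hi : i + 1 - (T + 1) = i - (T + 1) + 1 := by omega
    simpa [h, h.trans (Nat.lt_succ_self i), hi] using hv (i - (T + 1))

end PseudoOrbit

lemma le_last_of_segments {a b : ℕ → ℕ} {k : ℕ} (hab : ∀ j, 1 ≤ j → j ≤ k → a j ≤ b j)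
    (hgap : ∀ j, 2 ≤ j → j ≤ k → b (j - 1) ≤ a j) {j : ℕ} (hj : 1 ≤ j) (hjk : j ≤ k) :
    b j ≤ b k := by
  induction k, hjk using Nat.le_induction with
  | base => exact le_rfl
  | succ k hjk ih =>
    have hbk := ih (fun i h1 h2 => hab i h1 (by omega)) (fun i h1 h2 => hgap i h1 (by omega))
    have hgapk := hgap (k + 1) (by omega) le_rfl
    have habk := hab (k + 1) (by omega) le_rfl
    simp only [Nat.add_sub_cancel] at hgapk
    omega

section Specification

variable {X : Type*} [PseudoMetricSpace X]

lemma eventually_forall_exists_dist_lt_of_mixing {f : X → X}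
    (htb : TotallyBounded (Set.univ : Set X))
    (hmix : ∀ U V : Set X, IsOpen U → IsOpen V → U.Nonempty → V.Nonempty →
      ∃ N : ℕ, ∀ n : ℕ, N ≤ n → (f^[n] '' U ∩ V).Nonempty)
    {δ : ℝ} (hδ : 0 < δ) :
    ∀ᶠ n in atTop, ∀ p q : X, ∃ w, dist p w < δ ∧ dist (f^[n] w) q < δ := by
  have hδ2 := half_pos hδ
  obtain ⟨t, ht, hcover⟩ := totallyBounded_iff.1 htb (δ / 2) hδ2
  have hballs : ∀ᶠ n in atTop, ∀ c ∈ t, ∀ c' ∈ t,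
      (f^[n] '' ball c (δ / 2) ∩ ball c' (δ / 2)).Nonempty := by
    refine (eventually_all_finite ht).2 fun c _ => (eventually_all_finite ht).2 fun c' _ => ?_
    exact eventually_atTop.2 (hmix _ _ isOpen_ball isOpen_ball
      ⟨c, mem_ball_self hδ2⟩ ⟨c', mem_ball_self hδ2⟩)
  filter_upwards [hballs] with n hn p q
  obtain ⟨c, hc, hpc⟩ := Set.mem_iUnion₂.1 (hcover (Set.mem_univ p))
  obtain ⟨c', hc', hqc'⟩ := Set.mem_iUnion₂.1 (hcover (Set.mem_univ q))
  obtain ⟨_, ⟨w, hwc, rfl⟩, hwc'⟩ := hn c hc c' hc'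
  rw [mem_ball] at hpc hqc' hwc hwc'
  refine ⟨w, ?_, ?_⟩
  · linarith [dist_triangle_right p w c]
  · linarith [dist_triangle_right (f^[n] w) q c']

-- A bridge fills the `≥ N + 1` positions strictly inside a gap, so it is never empty.
lemma exists_pseudoOrbit_eq_on_segments {f : X → X} {δ : ℝ} {N : ℕ} (hδ : 0 < δ)
    (hN : ∀ n, N ≤ n → ∀ p q : X, ∃ w, dist p w < δ ∧ dist (f^[n] w) q < δ)
    {k : ℕ} (hk : 1 ≤ k) (xs : ℕ → X) {a b : ℕ → ℕ}
    (hab : ∀ j, 1 ≤ j → j ≤ k → a j ≤ b j)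
    (hgap : ∀ j, 2 ≤ j → j ≤ k → b (j - 1) + (N + 2) ≤ a j) :
    ∃ u, IsPseudoOrbit f δ u ∧ u 0 = xs 1 ∧
      ∀ j, 1 ≤ j → j ≤ k → ∀ i, a j ≤ i → i ≤ b j → u i = f^[i] (xs j) := by
  induction k, hk using Nat.le_induction with
  | base =>
    refine ⟨(f^[·] (xs 1)), isPseudoOrbit_iterate hδ _, rfl, fun j hj1 hj1' i _ _ => ?_⟩
    obtain rfl : j = 1 := by omega
    rfl
  | succ k hk ih =>
    obtain ⟨u, hu, hu0, hseg⟩ :=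
      ih (fun j h1 h2 => hab j h1 (by omega)) (fun j h1 h2 => hgap j h1 (by omega))
    have hgapk : b k + (N + 2) ≤ a (k + 1) := by simpa using hgap (k + 1) (by omega) le_rfl
    set y := xs (k + 1)
    obtain ⟨n, hn⟩ : ∃ n, n = a (k + 1) - (b k + 1) := ⟨_, rfl⟩
    obtain ⟨w, hw₁, hw₂⟩ := hN n (by omega) (f (u (b k))) (f^[a (k + 1)] y)
    have hbridge : IsPseudoOrbit f δ (appendAt (f^[·] w) (n - 1) (f^[·] (f^[a (k + 1)] y))) := by
      refine (isPseudoOrbit_iterate hδ w).appendAt (isPseudoOrbit_iterate hδ _) _ ?_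
      rwa [← Function.iterate_succ_apply' f, Nat.succ_eq_add_one, Nat.sub_add_cancel (by omega),
        Function.iterate_zero_apply]
    refine ⟨appendAt u (b k) _, hu.appendAt hbridge (b k) (by simpa using hw₁),
      by simpa using hu0, fun j hj1 hjk i hai hib => ?_⟩
    rcases Nat.lt_or_ge j (k + 1) with hj | hj
    · have hbj : b j ≤ b k := le_last_of_segments (fun i h1 h2 => hab i h1 (by omega))
        (fun i h1 h2 => (Nat.le_add_right _ _).trans (hgap i h1 (by omega))) hj1 (by omega)
      rw [appendAt_of_le (hib.trans hbj), hseg j hj1 (by omega) i hai hib]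
    · obtain rfl : j = k + 1 := by omega
      rw [appendAt_of_lt (by omega), appendAt_of_lt (by omega), ← Function.iterate_add_apply]
      congr 1
      omega

end Specification

theorem stmt_18_general {X : Type*} [MetricSpace X] (f : X → X)
    (htb : TotallyBounded (Set.univ : Set X))
    (hmix : ∀ U V : Set X, IsOpen U → IsOpen V → U.Nonempty → V.Nonempty →
      ∃ N : ℕ, ∀ n : ℕ, N ≤ n → (f^[n] '' U ∩ V).Nonempty)
    (x : X) (hx : ShadowablePoint f x) :
    SpecPoint f x := by
  intro ε hε
  obtain ⟨δ, hδ, hshadow⟩ := hx ε hε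
  obtain ⟨N, hN⟩ := eventually_atTop.1 (eventually_forall_exists_dist_lt_of_mixing htb hmix hδ)
  refine ⟨N + 2, fun k xs a b hk hxs1 hab hgap => ?_⟩
  obtain ⟨u, hu, hu0, hseg⟩ := exists_pseudoOrbit_eq_on_segments hδ hN hk xs hab hgap
  obtain ⟨z, hz⟩ := hshadow u (hu0.trans hxs1) hu
  exact ⟨z, fun j hj1 hjk i hai hib => hseg j hj1 hjk i hai hib ▸ hz i⟩

theorem stmt_18 {X : Type*} [MetricSpace X] (f : X → X) (hf : Continuous f)
    (htb : TotallyBounded (Set.univ : Set X))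
    (hmix : ∀ U V : Set X, IsOpen U → IsOpen V → U.Nonempty → V.Nonempty →
      ∃ N : ℕ, ∀ n : ℕ, N ≤ n → (f^[n] '' U ∩ V).Nonempty)
    (x : X) (hx : ShadowablePoint f x) :
    SpecPoint f x :=
  stmt_18_general f htb hmix x hx
end
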